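/- arXiv:2511.04379 — 3 statements merged into one kernel-verified Lean document; each statement's English description precedes it below -/
import Mathlib

section
/- Fix 0 < θ < 1. Let n̂_1 ≥ n̂_2 ≥ ... ≥ n̂_N (N ≥ 2) be positive integers with n̂_1 ≤ Σ_{l≥2} n̂_l. Then Σ_{l=1}^N n̂_l^θ ≥ 2·n̂_1^θ + (2 - 2^θ)·Σ_{l≥3} n̂_l^θ. -/
/-!
Concavity of `t ↦ t ^ θ` makes its increments decrease, so for `y ≤ x` adding `y` to `x` gains
at most `(2y)^θ - y^θ = (2^θ - 1) y^θ`. Adding the entries `n̂_l ≤ n̂_2` (`l ≥ 3`) one at a time to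
`n̂_2` gives `n̂_1^θ ≤ (n̂_2 + ∑_{l≥3} n̂_l)^θ ≤ n̂_2^θ + (2^θ - 1) ∑_{l≥3} n̂_l^θ`, which rearranges
to the claim.
-/

open Finset

theorem ConcaveOn.add_sub_le_add_sub {𝕜 : Type*} [Field 𝕜] [LinearOrder 𝕜] [IsStrictOrderedRing 𝕜]
    {s : Set 𝕜} {f : 𝕜 → 𝕜} (hf : ConcaveOn 𝕜 s f) {a b d : 𝕜} (ha : a ∈ s) (hbd : b + d ∈ s)
    (hab : a ≤ b) (hd : 0 ≤ d) : f (b + d) - f b ≤ f (a + d) - f a := by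
  rcases (add_nonneg (sub_nonneg.2 hab) hd).eq_or_lt with h0 | hpos
  · obtain rfl : a = b := by linarith
    obtain rfl : d = 0 := by linarith
    simp
  -- `a + d` and `b` are the convex combinations of `a` and `b + d` with swapped weights `1 - t`, `t`
  set t := d / (b - a + d) with ht
  have ht0 : 0 ≤ t := by positivity
  have ht1 : t ≤ 1 := by rw [ht, div_le_one hpos]; linarith
  have h₁ := hf.2 ha hbd (sub_nonneg.2 ht1) ht0 (sub_add_cancel 1 t)
  have h₂ := hf.2 ha hbd ht0 (sub_nonneg.2 ht1) (add_sub_cancel t 1)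
  have e₁ : (1 - t) * a + t * (b + d) = a + d := by rw [ht]; field_simp; ring
  have e₂ : t * a + (1 - t) * (b + d) = b := by rw [ht]; field_simp; ring
  simp only [smul_eq_mul, e₁, e₂] at h₁ h₂
  linarith

theorem Real.add_rpow_le_rpow_add_mul_rpow {θ x y : ℝ} (hθ₀ : 0 ≤ θ) (hθ₁ : θ ≤ 1)
    (hy : 0 ≤ y) (hyx : y ≤ x) : (x + y) ^ θ ≤ x ^ θ + (2 ^ θ - 1) * y ^ θ := by
  have h := (Real.concaveOn_rpow hθ₀ hθ₁).add_sub_le_add_sub (Set.mem_Ici.2 hy)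
    (Set.mem_Ici.2 (by linarith : 0 ≤ x + y)) hyx hy
  have h2y : (y + y) ^ θ = 2 ^ θ * y ^ θ := by
    rw [← two_mul, Real.mul_rpow zero_le_two hy]
  simp only [h2y] at h
  linarith

theorem Real.add_sum_rpow_le {ι : Type*} {θ b : ℝ} (hθ₀ : 0 ≤ θ) (hθ₁ : θ ≤ 1) (s : Finset ι)
    {f : ι → ℝ} (hf₀ : ∀ i ∈ s, 0 ≤ f i) (hfb : ∀ i ∈ s, f i ≤ b) :
    (b + ∑ i ∈ s, f i) ^ θ ≤ b ^ θ + (2 ^ θ - 1) * ∑ i ∈ s, f i ^ θ := by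
  classical
  induction s using Finset.induction with
  | empty => simp
  | insert a s ha ih =>
    simp only [forall_mem_insert] at hf₀ hfb
    rw [sum_insert ha, sum_insert ha]
    have hs₀ : 0 ≤ ∑ i ∈ s, f i := sum_nonneg hf₀.2
    have step : (b + ∑ i ∈ s, f i + f a) ^ θ ≤ (b + ∑ i ∈ s, f i) ^ θ + (2 ^ θ - 1) * f a ^ θ :=
      Real.add_rpow_le_rpow_add_mul_rpow hθ₀ hθ₁ hf₀.1 (by linarith)
    have hs := ih hf₀.2 hfb.2
    rw [show b + (f a + ∑ i ∈ s, f i) = b + ∑ i ∈ s, f i + f a by ring]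
    linarith

theorem Real.two_mul_rpow_add_mul_sum_rpow_le {ι : Type*} {θ a b : ℝ} (hθ₀ : 0 ≤ θ) (hθ₁ : θ ≤ 1)
    (s : Finset ι) {f : ι → ℝ} (ha : 0 ≤ a) (hf₀ : ∀ i ∈ s, 0 ≤ f i) (hfb : ∀ i ∈ s, f i ≤ b)
    (hab : a ≤ b + ∑ i ∈ s, f i) :
    2 * a ^ θ + (2 - 2 ^ θ) * ∑ i ∈ s, f i ^ θ ≤ a ^ θ + b ^ θ + ∑ i ∈ s, f i ^ θ := by
  have := (Real.rpow_le_rpow ha hab hθ₀).trans (Real.add_sum_rpow_le hθ₀ hθ₁ s hf₀ hfb)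
  linarith

/-- Sublinearity estimate: if the largest entry of a nonincreasing sequence of
positive integers is dominated by the sum of the others, then
∑ n̂_l^θ ≥ 2 n̂_1^θ + (2 - 2^θ) ∑_{l≥3} n̂_l^θ for 0 < θ < 1. -/
theorem stmt1 (θ : ℝ) (hθ : 0 < θ) (hθ1 : θ < 1) (N : ℕ) (hN : 2 ≤ N)
    (n : Fin N → ℕ) (hmono : Antitone n)
    (h1 : n ⟨0, by omega⟩ ≤ ∑ l ∈ Finset.univ.filter (fun l : Fin N => 1 ≤ l.val), n l) :
    2 * (n ⟨0, by omega⟩ : ℝ) ^ θ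
      + (2 - 2 ^ θ) * ∑ l ∈ Finset.univ.filter (fun l : Fin N => 2 ≤ l.val), (n l : ℝ) ^ θ
      ≤ ∑ l, (n l : ℝ) ^ θ := by
  obtain ⟨M, rfl⟩ : ∃ M, N = M + 2 := ⟨N - 2, by omega⟩
  -- split off the indices `0` and `1`; the remaining sums run over `i.succ.succ`, `i : Fin M`
  simp only [Fin.zero_eta, sum_filter, Fin.sum_univ_succ, Fin.coe_ofNat_eq_mod, Nat.zero_mod,
    nonpos_iff_eq_zero, one_ne_zero, ↓reduceIte, Fin.val_succ, le_add_iff_nonneg_left, zero_le,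
    Fin.succ_zero_eq_one, zero_add, OfNat.ofNat_ne_zero, Nat.reduceLeDiff] at h1 ⊢
  rw [← add_assoc]
  refine Real.two_mul_rpow_add_mul_sum_rpow_le hθ.le hθ1.le univ (Nat.cast_nonneg _)
    (fun _ _ => Nat.cast_nonneg _) (fun i _ => ?_) (mod_cast h1)
  exact_mod_cast hmono (by simp [Fin.le_iff_val_le_val])
end

section
/- Let λ = (2, 1, ζ_1, -ζ_1, ζ_2, -ζ_2) with 1, ζ_1, ζ_2 linearly independent over ℚ. Let Δ_λ := {P ∈ ℤ⁶ : P·λ = 0 and P + e_k ∈ ℕ⁶ for some k}. Then every P ∈ Δ_λ with P ∉ ℕ⁶ can be written uniquely as P = (2e_2 - e_1) + n_1(e_3+e_4) + n_2(e_5+e_6) with n_1, n_2 ∈ ℕ. -/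
/-- For λ = (2, 1, ζ₁, -ζ₁, ζ₂, -ζ₂) with 1, ζ₁, ζ₂ linearly independent over ℚ,
every P ∈ Δ_λ with P ∉ ℕ⁶ is uniquely P = (2e₂ - e₁) + n₁(e₃+e₄) + n₂(e₅+e₆). -/
theorem stmt6 (ζ1 ζ2 : ℝ) (h1 : ζ1 ≠ 0) (h2 : ζ2 ≠ 0)
    (hind : ∀ a b c : ℤ, (a : ℝ) + b * ζ1 + c * ζ2 = 0 → a = 0 ∧ b = 0 ∧ c = 0)
    (lam : Fin 6 → ℝ) (hlam : lam = ![2, 1, ζ1, -ζ1, ζ2, -ζ2])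
    (P : Fin 6 → ℤ)
    (hres : ∑ i, (P i : ℝ) * lam i = 0)
    (hk : ∃ k : Fin 6, ∀ i, 0 ≤ P i + (if i = k then 1 else 0))
    (hneg : ¬ ∀ i, 0 ≤ P i) :
    ∃! nn : ℕ × ℕ, P = ![-1, 2, (nn.1 : ℤ), nn.1, nn.2, nn.2] := by
  subst hlam
  rw [Fin.sum_univ_six] at hres
  have e0 : (![(2:ℝ), 1, ζ1, -ζ1, ζ2, -ζ2]) 0 = 2 := rfl
  have e1 : (![(2:ℝ), 1, ζ1, -ζ1, ζ2, -ζ2]) 1 = 1 := rfl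
  have e2 : (![(2:ℝ), 1, ζ1, -ζ1, ζ2, -ζ2]) 2 = ζ1 := rfl
  have e3 : (![(2:ℝ), 1, ζ1, -ζ1, ζ2, -ζ2]) 3 = -ζ1 := rfl
  have e4 : (![(2:ℝ), 1, ζ1, -ζ1, ζ2, -ζ2]) 4 = ζ2 := rfl
  have e5 : (![(2:ℝ), 1, ζ1, -ζ1, ζ2, -ζ2]) 5 = -ζ2 := rfl
  rw [e0, e1, e2, e3, e4, e5] at hres
  have hres' : (P 0 : ℝ) * 2 + P 1 * 1 + P 2 * ζ1 + P 3 * (-ζ1) + P 4 * ζ2 + P 5 * (-ζ2) = 0 := hres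
  obtain ⟨ha, hb, hc⟩ := hind (2 * P 0 + P 1) (P 2 - P 3) (P 4 - P 5)
    (by push_cast; linear_combination hres')
  have h23 : P 2 = P 3 := by omega
  have h45 : P 4 = P 5 := by omega
  obtain ⟨k, hk⟩ := hk
  push_neg at hneg
  obtain ⟨j, hj⟩ := hneg
  have hA : ∀ i, -1 ≤ P i := fun i => by have := hk i; split at this <;> omega
  have hB : ∀ i i' : Fin 6, i ≠ i' → 0 ≤ P i ∨ 0 ≤ P i' := by
    intro i i' hne
    have hi := hk i; have hi' := hk i'
    rcases eq_or_ne i k with rfl | h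
    · right
      rw [if_neg (fun h => hne h.symm)] at hi'
      omega
    · left
      rw [if_neg h] at hi
      omega
  have hP2 : 0 ≤ P 2 := by rcases hB 2 3 (by decide) with h | h <;> omega
  have hP4 : 0 ≤ P 4 := by rcases hB 4 5 (by decide) with h | h <;> omega
  have hP1 : 0 ≤ P 1 := by have := hA 1; omega
  have hP0 : P 0 = -1 := by
    have h6 := hA 0
    fin_cases j
    · have : P 0 < 0 := hj; omega
    · have : P 1 < 0 := hj; omega
    · have : P 2 < 0 := hj; omega
    · have : P 3 < 0 := hj; omega
    · have : P 4 < 0 := hj; omega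
    · have : P 5 < 0 := hj; omega
  have hP1' : P 1 = 2 := by omega
  refine ⟨((P 2).toNat, (P 4).toNat), ?_, ?_⟩
  · funext i
    fin_cases i
    · show P 0 = -1; omega
    · show P 1 = 2; omega
    · show P 2 = ((P 2).toNat : ℤ); omega
    · show P 3 = ((P 2).toNat : ℤ); omega
    · show P 4 = ((P 4).toNat : ℤ); omega
    · show P 5 = ((P 4).toNat : ℤ); omega
  · rintro ⟨n1, n2⟩ hnn
    have e2 : P 2 = n1 := by rw [hnn]; rfl
    have e4 : P 4 = n2 := by rw [hnn]; rfl
    simp only [Prod.mk.injEq]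
    omega
end

section
/- Let (ε_n) and (Θ_n) be sequences of nonnegative reals satisfying ε_{n+1} ≤ K·c^n·(1+Θ_n)^7 ε_n² and |Θ_{n+1} - Θ_n| ≤ K·c^n·(1+Θ_n)^7 ε_n Θ_n for all n ≥ 0, where K ≥ 1, c > 1. Then there exists ε* > 0, depending only on K, c, Θ_0, such that if ε_0 ≤ ε*, then for all n: ε_n ≤ ε_0 e^{-(3/2)^n + 1} and Θ_n ≤ 2Θ_0. -/
/-!
Freeze the coefficient: while `Θ n ≤ 2 Θ 0`, both recursions hold with `K (1 + Θ n)⁷` replaced by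
`M = K (1 + 2 Θ 0)⁷`. Then `δ n = M c^(n+1) ε n` satisfies `δ (n+1) ≤ (δ n)²`, hence
`δ n ≤ (δ 0)^(2^n) ≤ e^(-2·2^n)` once `δ 0 ≤ e⁻²`, which is the superexponential decay of `ε n`.
In particular `M cⁿ ε n ≤ 2^-(n+2)`, so step `n` increases `Θ` by at most `2^-(n+1) Θ 0`; this
keeps `Θ n ≤ (2 - 2^-n) Θ 0` and closes the bootstrap.
-/

open Real

lemma pow_two_pow_le_half_pow {δ : ℝ} (h0 : 0 ≤ δ) (h : δ ≤ exp (-2)) (k : ℕ) :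
    δ ^ 2 ^ k ≤ (1 / 2) ^ (k + 2) := by
  have hquarter : δ ≤ (1 / 2) ^ 2 := by
    have : exp (-2) = exp (-1) ^ 2 := by rw [← exp_nat_mul]; norm_num
    nlinarith [exp_neg_one_lt_half, exp_pos (-1)]
  calc δ ^ 2 ^ k ≤ ((1 / 2) ^ 2) ^ 2 ^ k := pow_le_pow_left₀ h0 hquarter _
    _ = (1 / 2) ^ 2 ^ (k + 1) := by rw [← pow_mul, pow_succ, mul_comm]
    _ ≤ (1 / 2) ^ (k + 2) :=
      pow_le_pow_of_le_one (by norm_num) (by norm_num) (Nat.lt_two_pow_self (n := k + 1))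

lemma pow_two_pow_sub_one_le_exp {δ : ℝ} (h0 : 0 ≤ δ) (h : δ ≤ exp (-2)) (n : ℕ) :
    δ ^ (2 ^ n - 1) ≤ exp (-(3 / 2) ^ n + 1) := by
  have hcast : ((2 ^ n - 1 : ℕ) : ℝ) = 2 ^ n - 1 := by
    rw [Nat.cast_sub Nat.one_le_two_pow]; push_cast; ring
  have h32 : (3 / 2 : ℝ) ^ n ≤ 2 ^ n := pow_le_pow_left₀ (by norm_num) (by norm_num) n
  have h1 : (1 : ℝ) ≤ 2 ^ n := one_le_pow₀ one_le_two
  calc δ ^ (2 ^ n - 1) ≤ exp (-2) ^ (2 ^ n - 1) := pow_le_pow_left₀ h0 h _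
    _ = exp (-2 * (2 ^ n - 1)) := by rw [← exp_nat_mul, hcast, mul_comm]
    _ ≤ exp (-(3 / 2) ^ n + 1) := exp_le_exp.2 (by linarith)

section Bootstrap

variable {M c : ℝ} {ε Θ : ℕ → ℝ}

theorem bootstrap_of_frozen_coeff (hM : 0 ≤ M) (hc : 1 ≤ c)
    (hε : ∀ n, 0 ≤ ε n) (hΘ : ∀ n, 0 ≤ Θ n)
    (hε_step : ∀ n, Θ n ≤ 2 * Θ 0 → ε (n + 1) ≤ M * c ^ n * ε n ^ 2)
    (hΘ_step : ∀ n, Θ n ≤ 2 * Θ 0 → Θ (n + 1) ≤ Θ n + M * c ^ n * ε n * Θ n)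
    (hsmall : M * c * ε 0 ≤ exp (-2)) (n : ℕ) :
    M * c ^ (n + 1) * ε n ≤ (M * c * ε 0) ^ 2 ^ n ∧ Θ n ≤ Θ 0 * (2 - (1 / 2) ^ n) := by
  have hδ0 : 0 ≤ M * c * ε 0 := by have := hε 0; positivity
  induction n with
  | zero => norm_num
  | succ k ih =>
    obtain ⟨hδk, hΘk⟩ := ih
    have hhalf : (0 : ℝ) ≤ (1 / 2) ^ k := by positivity
    have hΘ2 : Θ k ≤ 2 * Θ 0 := by nlinarith [hΘ 0]
    constructor
    · calc M * c ^ (k + 1 + 1) * ε (k + 1) ≤ M * c ^ (k + 1 + 1) * (M * c ^ k * ε k ^ 2) :=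
            mul_le_mul_of_nonneg_left (hε_step k hΘ2) (by positivity)
        _ = (M * c ^ (k + 1) * ε k) ^ 2 := by ring
        _ ≤ ((M * c * ε 0) ^ 2 ^ k) ^ 2 := pow_le_pow_left₀ (by have := hε k; positivity) hδk 2
        _ = (M * c * ε 0) ^ 2 ^ (k + 1) := by rw [← pow_mul, ← pow_succ]
    · have hδ : M * c ^ k * ε k ≤ (1 / 2) ^ (k + 2) := by
        have : M * c ^ k * ε k ≤ M * c ^ (k + 1) * ε k := by
          have := hε k; gcongr; omega
        linarith [pow_two_pow_le_half_pow hδ0 hsmall k]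
      have hincr : M * c ^ k * ε k * Θ k ≤ (1 / 2) ^ (k + 2) * (2 * Θ 0) :=
        mul_le_mul hδ hΘ2 (hΘ k) (by positivity)
      calc Θ (k + 1) ≤ Θ k + M * c ^ k * ε k * Θ k := hΘ_step k hΘ2
        _ ≤ Θ 0 * (2 - (1 / 2) ^ k) + (1 / 2) ^ (k + 2) * (2 * Θ 0) := add_le_add hΘk hincr
        _ = Θ 0 * (2 - (1 / 2) ^ (k + 1)) := by ring

lemma le_mul_exp_of_le_pow_two_pow (hM : 0 < M) (hc : 1 ≤ c) (hε : ∀ n, 0 ≤ ε n)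
    (hsmall : M * c * ε 0 ≤ exp (-2)) {n : ℕ}
    (hδ : M * c ^ (n + 1) * ε n ≤ (M * c * ε 0) ^ 2 ^ n) :
    ε n ≤ ε 0 * exp (-(3 / 2) ^ n + 1) := by
  have hδ0 : 0 ≤ M * c * ε 0 := by have := hε 0; positivity
  have hMc : 0 < M * c := by positivity
  have hsplit : (M * c * ε 0) ^ 2 ^ n = M * c * (ε 0 * (M * c * ε 0) ^ (2 ^ n - 1)) := by
    rw [← mul_assoc, ← pow_succ', Nat.sub_add_cancel Nat.one_le_two_pow]
  have hcn : c ^ n * ε n ≤ ε 0 * (M * c * ε 0) ^ (2 ^ n - 1) := by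
    refine le_of_mul_le_mul_left ?_ hMc
    calc M * c * (c ^ n * ε n) = M * c ^ (n + 1) * ε n := by ring
      _ ≤ _ := hδ
      _ = _ := hsplit
  calc ε n ≤ c ^ n * ε n := le_mul_of_one_le_left (hε n) (one_le_pow₀ hc)
    _ ≤ ε 0 * (M * c * ε 0) ^ (2 ^ n - 1) := hcn
    _ ≤ ε 0 * exp (-(3 / 2) ^ n + 1) :=
      mul_le_mul_of_nonneg_left (pow_two_pow_sub_one_le_exp hδ0 hsmall n) (hε 0)

end Bootstrap

/-- Abstract quadratic-convergence (KAM/Newton) iteration lemma: if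
ε_{n+1} ≤ K cⁿ (1+Θ_n)⁷ ε_n² and |Θ_{n+1} - Θ_n| ≤ K cⁿ (1+Θ_n)⁷ ε_n Θ_n, then
for ε₀ small enough (depending only on K, c, Θ₀ = B) one has superexponential
decay ε_n ≤ ε₀ e^{-(3/2)ⁿ + 1} and Θ_n ≤ 2Θ₀. -/
theorem stmt16 (K c B : ℝ) (hK : 1 ≤ K) (hc : 1 < c) (hB : 0 ≤ B) :
    ∃ εstar > (0 : ℝ), ∀ ε Θ : ℕ → ℝ,
      (∀ n, 0 ≤ ε n) → (∀ n, 0 ≤ Θ n) → Θ 0 = B →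
      (∀ n, ε (n + 1) ≤ K * c ^ n * (1 + Θ n) ^ 7 * (ε n) ^ 2) →
      (∀ n, |Θ (n + 1) - Θ n| ≤ K * c ^ n * (1 + Θ n) ^ 7 * ε n * Θ n) →
      ε 0 ≤ εstar →
      ∀ n, ε n ≤ ε 0 * Real.exp (-(3 / 2 : ℝ) ^ n + 1) ∧ Θ n ≤ 2 * B := by
  have hK0 : 0 < K := by linarith
  have hM : 0 < K * (1 + 2 * B) ^ 7 := by positivity
  refine ⟨exp (-2) / (K * (1 + 2 * B) ^ 7 * c), by positivity, ?_⟩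
  intro ε Θ hε hΘ hΘ0 hrecε hrecΘ hε0 n
  subst hΘ0
  set M := K * (1 + 2 * Θ 0) ^ 7
  have hcoeff n (hn : Θ n ≤ 2 * Θ 0) : K * c ^ n * (1 + Θ n) ^ 7 ≤ M * c ^ n :=
    calc K * c ^ n * (1 + Θ n) ^ 7 ≤ K * c ^ n * (1 + 2 * Θ 0) ^ 7 := by
          have := hΘ n; gcongr
      _ = M * c ^ n := by ring
  have hε_step n (hn : Θ n ≤ 2 * Θ 0) : ε (n + 1) ≤ M * c ^ n * ε n ^ 2 :=
    (hrecε n).trans (mul_le_mul_of_nonneg_right (hcoeff n hn) (sq_nonneg _))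
  have hΘ_step n (hn : Θ n ≤ 2 * Θ 0) : Θ (n + 1) ≤ Θ n + M * c ^ n * ε n * Θ n := by
    have := (abs_le.1 (hrecΘ n)).2
    have := mul_le_mul_of_nonneg_right
      (mul_le_mul_of_nonneg_right (hcoeff n hn) (hε n)) (hΘ n)
    linarith
  have hsmall := (le_div_iff₀' (by positivity)).1 hε0
  obtain ⟨hδ, hΘn⟩ := bootstrap_of_frozen_coeff hM.le hc.le hε hΘ hε_step hΘ_step hsmall n
  refine ⟨le_mul_exp_of_le_pow_two_pow hM hc.le hε hsmall hδ, ?_⟩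
  nlinarith [hΘ 0, pow_nonneg (by norm_num : (0 : ℝ) ≤ 1 / 2) n]
end
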